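/- For ε_1,...,ε_n independent Rademacher signs, a, b ∈ R^n, p ≥ 1, I ⊂ {1,...,n}, and I_1 ⊂ I the set of indices of the p largest values of (|a_i|)_{i∈I}: there is an absolute constant c_1 with (E |Σ_{i∈I} ε_i a_i b_i|^p)^{1/p} ≤ Σ_{i∈I_1} |a_i b_i| + c_1 √p (Σ_{i ∈ I∖I_1} a_i^2 b_i^2)^{1/2}. -/

import Mathlib

/-!
Split the sum over `I` as the sum over `I₁` plus the sum over `I \ I₁` and apply Minkowski's
inequality in `L^p` of the uniform measure on sign vectors. The sum over `I₁` is bounded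
pointwise by `∑ i ∈ I₁, |a i * b i|`. For the sum `S` over the rest, with `x_i = a_i b_i` and
`σ² = ∑ x_i²`, the moment generating function factors as `∏ cosh (t x_i) ≤ exp (t² σ² / 2)`
(Hoeffding); together with `|u|^p ≤ p! (e^u + e^{-u})` at `t = √p / σ` this gives
`E |S|^p ≤ (4 √p σ)^p`, so `c₁ = 4`.
-/

open Finset Real

theorem pow_abs_le_factorial_mul_exp_add_exp (t : ℝ) (p : ℕ) :
    |t| ^ p ≤ p.factorial * (exp t + exp (-t)) := by
  have hexp : exp |t| ≤ exp t + exp (-t) := by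
    rcases abs_cases t with ⟨h, _⟩ | ⟨h, _⟩ <;> rw [h] <;> linarith [exp_pos t, exp_pos (-t)]
  have htaylor := pow_div_factorial_le_exp |t| (abs_nonneg t) p
  rw [div_le_iff₀ (by positivity)] at htaylor
  nlinarith [(by exact_mod_cast Nat.factorial_pos p : (0 : ℝ) < p.factorial)]

theorem two_mul_factorial_mul_exp_half_le {p : ℕ} (hp : 1 ≤ p) :
    2 * p.factorial * exp (p / 2) ≤ (4 * p) ^ p := by
  have hexp : exp (1 / 2) ≤ 2 := by
    have : exp (1 / 2) ^ 2 = exp 1 := by rw [← exp_nat_mul]; norm_num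
    nlinarith [exp_pos (1 / 2), exp_one_lt_d9]
  calc 2 * p.factorial * exp (p / 2) = 2 * p.factorial * exp (1 / 2) ^ p := by
        rw [← exp_nat_mul]; ring_nf
    _ ≤ 2 ^ p * (p : ℝ) ^ p * 2 ^ p := by
        gcongr
        · simpa using pow_le_pow_right₀ one_le_two hp
        · exact_mod_cast Nat.factorial_le_pow p
    _ = (4 * p) ^ p := by rw [mul_pow, show (4 : ℝ) = 2 * 2 by norm_num, mul_pow]; ring

section Rademacher

variable {ι : Type*}

noncomputable def rademacherSum (J : Finset ι) (x : ι → ℝ) (ε : ι → Bool) : ℝ :=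
  ∑ i ∈ J, (if ε i then 1 else -1) * x i

theorem abs_rademacherSum_le (J : Finset ι) (x : ι → ℝ) (ε : ι → Bool) :
    |rademacherSum J x ε| ≤ ∑ i ∈ J, |x i| :=
  (abs_sum_le_sum_abs _ _).trans_eq <| sum_congr rfl fun i _ => by
    rw [abs_mul]; cases ε i <;> simp

theorem rademacherSum_const_mul (J : Finset ι) (c : ℝ) (x : ι → ℝ) (ε : ι → Bool) :
    rademacherSum J (fun i => c * x i) ε = c * rademacherSum J x ε := by
  simp only [rademacherSum, mul_sum]
  exact sum_congr rfl fun i _ => by ring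

variable [DecidableEq ι]

theorem rademacherSum_eq_add_sdiff {J K : Finset ι} (h : K ⊆ J) (x : ι → ℝ) (ε : ι → Bool) :
    rademacherSum J x ε = rademacherSum K x ε + rademacherSum (J \ K) x ε :=
  (sum_sdiff h).symm.trans (add_comm _ _)

variable [Fintype ι]

theorem sum_abs_rademacherSum_pow_le_sum_abs_pow (J : Finset ι) (x : ι → ℝ) (p : ℕ) :
    ∑ ε : ι → Bool, |rademacherSum J x ε| ^ p ≤ 2 ^ Fintype.card ι * (∑ i ∈ J, |x i|) ^ p := by
  calc ∑ ε : ι → Bool, |rademacherSum J x ε| ^ p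
      ≤ ∑ _ε : ι → Bool, (∑ i ∈ J, |x i|) ^ p := by
        gcongr with ε; exact abs_rademacherSum_le J x ε
    _ = 2 ^ Fintype.card ι * (∑ i ∈ J, |x i|) ^ p := by
        simp

theorem sum_exp_rademacherSum (J : Finset ι) (x : ι → ℝ) :
    ∑ ε : ι → Bool, exp (rademacherSum J x ε) = 2 ^ Fintype.card ι * ∏ i ∈ J, cosh (x i) := by
  have hfactor : ∀ i, ∑ s : Bool, (if i ∈ J then exp ((if s then 1 else -1) * x i) else 1)
      = 2 * if i ∈ J then cosh (x i) else 1 := by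
    intro i
    split_ifs
    · simp only [Fintype.sum_bool, ↓reduceIte, Bool.false_eq_true, one_mul, neg_one_mul,
        cosh_eq]; ring
    · simp
  calc ∑ ε : ι → Bool, exp (rademacherSum J x ε)
      = ∑ ε : ι → Bool, ∏ i, (if i ∈ J then exp ((if ε i then 1 else -1) * x i) else 1) := by
        simp only [rademacherSum, exp_sum, prod_ite_mem, univ_inter]
    _ = ∏ i, ∑ s : Bool, (if i ∈ J then exp ((if s then 1 else -1) * x i) else 1) :=
        (Fintype.prod_sum fun i (s : Bool) =>
          if i ∈ J then exp ((if s then 1 else -1) * x i) else 1).symm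
    _ = ∏ i, (2 * if i ∈ J then cosh (x i) else 1) := by simp only [hfactor]
    _ = 2 ^ Fintype.card ι * ∏ i ∈ J, cosh (x i) := by
        rw [prod_mul_distrib, prod_const, card_univ, prod_ite_mem, univ_inter]

theorem sum_exp_rademacherSum_le (J : Finset ι) (x : ι → ℝ) :
    ∑ ε : ι → Bool, exp (rademacherSum J x ε)
      ≤ 2 ^ Fintype.card ι * exp ((∑ i ∈ J, x i ^ 2) / 2) := by
  rw [sum_exp_rademacherSum, sum_div, exp_sum]
  gcongr with i
  exact cosh_le_exp_half_sq _

theorem pow_mul_sum_abs_rademacherSum_pow_le (J : Finset ι) (x : ι → ℝ) (p : ℕ) {t : ℝ}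
    (ht : 0 ≤ t) :
    t ^ p * ∑ ε : ι → Bool, |rademacherSum J x ε| ^ p
      ≤ 2 * p.factorial * 2 ^ Fintype.card ι * exp (t ^ 2 * (∑ i ∈ J, x i ^ 2) / 2) := by
  have hmgf : ∀ c : ℝ, ∑ ε : ι → Bool, exp (c * rademacherSum J x ε)
      ≤ 2 ^ Fintype.card ι * exp (c ^ 2 * (∑ i ∈ J, x i ^ 2) / 2) := fun c => by
    simpa only [rademacherSum_const_mul, mul_pow, mul_sum] using
      sum_exp_rademacherSum_le J (fun i => c * x i)
  calc t ^ p * ∑ ε : ι → Bool, |rademacherSum J x ε| ^ p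
      = ∑ ε : ι → Bool, |t * rademacherSum J x ε| ^ p := by
        simp only [mul_sum, abs_mul, mul_pow, abs_of_nonneg ht]
    _ ≤ ∑ ε : ι → Bool, p.factorial *
          (exp (t * rademacherSum J x ε) + exp (-t * rademacherSum J x ε)) := by
        gcongr with ε
        simpa only [neg_mul] using pow_abs_le_factorial_mul_exp_add_exp _ p
    _ ≤ p.factorial * (2 ^ Fintype.card ι * exp (t ^ 2 * (∑ i ∈ J, x i ^ 2) / 2)
          + 2 ^ Fintype.card ι * exp ((-t) ^ 2 * (∑ i ∈ J, x i ^ 2) / 2)) := by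
        rw [← mul_sum, sum_add_distrib]
        gcongr <;> exact hmgf _
    _ = 2 * p.factorial * 2 ^ Fintype.card ι * exp (t ^ 2 * (∑ i ∈ J, x i ^ 2) / 2) := by
        rw [neg_sq]; ring

theorem sum_abs_rademacherSum_pow_le (J : Finset ι) (x : ι → ℝ) {p : ℕ} (hp : 1 ≤ p) :
    ∑ ε : ι → Bool, |rademacherSum J x ε| ^ p
      ≤ 2 ^ Fintype.card ι * (4 * √p * √(∑ i ∈ J, x i ^ 2)) ^ p := by
  set s := ∑ i ∈ J, x i ^ 2
  rcases (sum_nonneg fun i _ => sq_nonneg (x i) : 0 ≤ s).eq_or_lt with hs0 | hs0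
  · have hx : ∀ i ∈ J, x i = 0 := fun i hi =>
      pow_eq_zero_iff two_ne_zero |>.mp <|
        (sum_eq_zero_iff_of_nonneg fun i _ => sq_nonneg (x i)).mp hs0.symm i hi
    have hR : ∀ ε, rademacherSum J x ε = 0 := fun ε =>
      sum_eq_zero fun i hi => by rw [hx i hi, mul_zero]
    simp only [hR, abs_zero, zero_pow (by omega : p ≠ 0), sum_const_zero]
    positivity
  -- at `t = √p / √s` the Gaussian factor of the exponential moment bound becomes `exp (p / 2)`
  set t := √p / √s
  have ht : 0 < t := by positivity
  have hts : t ^ 2 * s = p := by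
    rw [div_pow, sq_sqrt (by positivity), sq_sqrt hs0.le, div_mul_cancel₀ _ hs0.ne']
  have hmoment : t ^ p * ∑ ε : ι → Bool, |rademacherSum J x ε| ^ p
      ≤ 2 ^ Fintype.card ι * (4 * p) ^ p := calc
    _ ≤ 2 * p.factorial * 2 ^ Fintype.card ι * exp (t ^ 2 * s / 2) :=
        pow_mul_sum_abs_rademacherSum_pow_le J x p ht.le
    _ = 2 ^ Fintype.card ι * (2 * p.factorial * exp (p / 2)) := by rw [hts]; ring
    _ ≤ 2 ^ Fintype.card ι * (4 * p) ^ p := by gcongr; exact two_mul_factorial_mul_exp_half_le hp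
  have hroot : 4 * p / t = 4 * √p * √s := by
    simp only [t]
    field_simp
    rw [sq_sqrt (by positivity)]
  calc ∑ ε : ι → Bool, |rademacherSum J x ε| ^ p ≤ 2 ^ Fintype.card ι * (4 * p) ^ p / t ^ p := by
        rw [le_div_iff₀' (by positivity)]; exact hmoment
    _ = 2 ^ Fintype.card ι * (4 * √p * √s) ^ p := by rw [mul_div_assoc, ← div_pow, hroot]

end Rademacher

section UniformLpNorm

variable {Ω : Type*} [Fintype Ω]

noncomputable def uniformLpNorm (p : ℝ) (f : Ω → ℝ) : ℝ :=
  ((∑ ω, |f ω| ^ p) / Fintype.card Ω) ^ p⁻¹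

theorem uniformLpNorm_add_le {p : ℝ} (hp : 1 ≤ p) (f g : Ω → ℝ) :
    uniformLpNorm p (f + g) ≤ uniformLpNorm p f + uniformLpNorm p g := by
  have hsum : ∀ h : Ω → ℝ, 0 ≤ ∑ ω, |h ω| ^ p := fun h =>
    sum_nonneg fun ω _ => rpow_nonneg (abs_nonneg _) _
  simp only [uniformLpNorm]
  rw [div_rpow (hsum _) (Nat.cast_nonneg _), div_rpow (hsum f) (Nat.cast_nonneg _),
    div_rpow (hsum g) (Nat.cast_nonneg _), ← add_div]
  gcongr
  have hminkowski := Lp_add_le univ f g hp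
  rw [one_div] at hminkowski
  exact hminkowski

theorem uniformLpNorm_le_of_sum_pow_le [Nonempty Ω] {p : ℕ} (hp : p ≠ 0) {f : Ω → ℝ} {M : ℝ}
    (hM : 0 ≤ M) (h : ∑ ω, |f ω| ^ p ≤ Fintype.card Ω * M ^ p) :
    uniformLpNorm p f ≤ M := by
  simp only [uniformLpNorm, rpow_natCast]
  calc ((∑ ω, |f ω| ^ p) / Fintype.card Ω) ^ (p : ℝ)⁻¹ ≤ (M ^ p) ^ (p : ℝ)⁻¹ := by
        gcongr
        rwa [div_le_iff₀' (by exact_mod_cast Fintype.card_pos)]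
    _ = M := pow_rpow_inv_natCast hM hp

end UniformLpNorm

/-- **Splitting a Rademacher sum.** If `I₁ ⊆ I` consists of the (at most `p`) indices with
the largest values of `|a i|` among `i ∈ I`, then there is an absolute constant `c₁` with
`(E |Σ_{i∈I} ε_i a_i b_i|^p)^{1/p} ≤ Σ_{i∈I₁} |a_i b_i| + c₁ √p (Σ_{i∈I∖I₁} a_i² b_i²)^{1/2}`,
the expectation being over independent Rademacher signs. -/
theorem rademacher_sum_split_bound :
    ∃ c₁ : ℝ, 0 < c₁ ∧
      ∀ (n : ℕ) (a b : Fin n → ℝ) (I I₁ : Finset (Fin n)) (p : ℕ), 1 ≤ p →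
        I₁ ⊆ I → I₁.card = min p I.card →
        (∀ i ∈ I \ I₁, ∀ j ∈ I₁, |a i| ≤ |a j|) →
        ((∑ ε : Fin n → Bool,
            |∑ i ∈ I, (if ε i then (1:ℝ) else -1) * a i * b i| ^ (p : ℝ)) / 2 ^ n)
            ^ (p : ℝ)⁻¹
          ≤ (∑ i ∈ I₁, |a i * b i|)
            + c₁ * Real.sqrt p * Real.sqrt (∑ i ∈ I \ I₁, a i ^ 2 * b i ^ 2) := by
  refine ⟨4, by norm_num, fun n a b I I₁ p hp hI₁ _ _ => ?_⟩
  set x : Fin n → ℝ := fun i => a i * b i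
  have hcard : (Fintype.card (Fin n → Bool) : ℝ) = 2 ^ Fintype.card (Fin n) := by simp
  have hhead := sum_abs_rademacherSum_pow_le_sum_abs_pow I₁ x p
  have htail := sum_abs_rademacherSum_pow_le (I \ I₁) x hp
  rw [← hcard] at hhead htail
  calc _ = uniformLpNorm p (rademacherSum I x) := by
        simp [uniformLpNorm, rademacherSum, x]
    _ = uniformLpNorm p (rademacherSum I₁ x + rademacherSum (I \ I₁) x) := by
        congr; funext ε; exact rademacherSum_eq_add_sdiff hI₁ x ε
    _ ≤ uniformLpNorm p (rademacherSum I₁ x) + uniformLpNorm p (rademacherSum (I \ I₁) x) :=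
        uniformLpNorm_add_le (by exact_mod_cast hp) _ _
    _ ≤ _ := by
        gcongr
        · exact uniformLpNorm_le_of_sum_pow_le (by omega) (by positivity) hhead
        · simpa only [x, mul_pow] using
            uniformLpNorm_le_of_sum_pow_le (by omega) (by positivity) htail
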